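/- arXiv:2405.03867 — 4 statements merged into one kernel-verified Lean document; each statement's English description precedes it below -/
import Mathlib

section
/- Let V be a finite-dimensional complex vector space equipped with two norms N₀ and N₁, and for θ ∈ (0,1) let ‖·‖_θ denote the complex interpolation norm of the couple (V,N₀), (V,N₁). Then for every x ∈ V one has lim_{θ→0⁺} ‖x‖_θ = N₀(x) and lim_{θ→1⁻} ‖x‖_θ = N₁(x). (Every finite-dimensional regular compatible couple is norm continuous at both endpoints of the scale; Proposition 3.10, finite-dimensional case.) -/
open Complex Set Filter Topology

noncomputable section

/-- The closed strip `𝕊 = {z : 0 ≤ Re z ≤ 1}`. -/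
def closedStrip : Set ℂ := {z : ℂ | 0 ≤ z.re ∧ z.re ≤ 1}

/-- The open strip `{z : 0 < Re z < 1}`. -/
def openStrip : Set ℂ := {z : ℂ | 0 < z.re ∧ z.re < 1}

/-- `N` is a norm on the complex vector space `V`. -/
structure IsNorm (V : Type*) [AddCommGroup V] [Module ℂ V] (N : V → ℝ) : Prop where
  eq_zero_iff : ∀ x : V, N x = 0 ↔ x = 0
  smul : ∀ (a : ℂ) (x : V), N (a • x) = ‖a‖ * N x
  add_le : ∀ x y : V, N (x + y) ≤ N x + N y

/-- The complex interpolation norm at parameter `θ` of the couple of norms `(N₀, N₁)` on `V`: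
the infimum of `max(sup_t N₀ (f it), sup_t N₁ (f (1+it)))` over all `f` bounded and continuous on
the closed strip, holomorphic on the open strip, with `f θ = x`. -/
def interpNorm {V : Type*} [NormedAddCommGroup V] [NormedSpace ℂ V]
    (N₀ N₁ : V → ℝ) (θ : ℝ) (x : V) : ℝ :=
  sInf {M : ℝ | ∃ f : ℂ → V,
    (∃ C : ℝ, ∀ z ∈ closedStrip, ‖f z‖ ≤ C) ∧
    ContinuousOn f closedStrip ∧
    DifferentiableOn ℂ f openStrip ∧
    f (θ : ℂ) = x ∧
    M = max (⨆ t : ℝ, N₀ (f (Complex.I * t))) (⨆ t : ℝ, N₁ (f (1 + Complex.I * t)))}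


lemma IsNorm.nonneg {V : Type*} [AddCommGroup V] [Module ℂ V] {N : V → ℝ}
    (h : IsNorm V N) (y : V) : 0 ≤ N y := by
  have h1 : N (y + (-1 : ℂ) • y) = N 0 := by rw [neg_one_smul]; simp
  have h2 : N 0 = 0 := (h.eq_zero_iff 0).mpr rfl
  have h3 := h.add_le y ((-1 : ℂ) • y)
  have h4 : N ((-1 : ℂ) • y) = N y := by rw [h.smul]; simp
  rw [h1, h2, h4] at h3
  linarith

/-- Type copy of `V` carrying the norm `N`. -/
def NormCopy (V : Type*) (N : V → ℝ) : Type _ := V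

lemma IsNorm.copy_facts {V : Type*} [NormedAddCommGroup V] [NormedSpace ℂ V]
    [FiniteDimensional ℂ V] {N : V → ℝ} (h : IsNorm V N) (x : V) :
    (∃ φ : V →ₗ[ℂ] ℂ, (∀ y, ‖φ y‖ ≤ N y) ∧ ‖φ x‖ = N x) ∧
    (∃ C, 0 < C ∧ ∀ y, N y ≤ C * ‖y‖) ∧
    (∃ c, 0 < c ∧ ∀ y, ‖y‖ ≤ c * N y) := by
  letI : AddCommGroup (NormCopy V N) := inferInstanceAs (AddCommGroup V)
  letI : Module ℂ (NormCopy V N) := inferInstanceAs (Module ℂ V)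
  letI : Norm (NormCopy V N) := ⟨N⟩
  have core : NormedSpace.Core ℂ (NormCopy V N) :=
    { norm_nonneg := h.nonneg
      norm_smul := h.smul
      norm_triangle := h.add_le
      norm_eq_zero_iff := h.eq_zero_iff }
  letI : NormedAddCommGroup (NormCopy V N) := NormedAddCommGroup.ofCore core
  letI : NormedSpace ℂ (NormCopy V N) := NormedSpace.ofCore core
  letI : FiniteDimensional ℂ (NormCopy V N) := inferInstanceAs (FiniteDimensional ℂ V)
  set jL : V →ₗ[ℂ] NormCopy V N := (LinearMap.id : V →ₗ[ℂ] V) with hjL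
  set kL : NormCopy V N →ₗ[ℂ] V := (LinearMap.id : V →ₗ[ℂ] V) with hkL
  have hnorm : ∀ v : V, ‖jL v‖ = N v := fun _ => rfl
  refine ⟨?_, ?_, ?_⟩
  · by_cases hx : x = 0
    · refine ⟨0, fun y => by simpa using h.nonneg y, ?_⟩
      simp [hx, (h.eq_zero_iff 0).mpr rfl]
    · have hx' : jL x ≠ 0 := hx
      obtain ⟨g, hg1, hgx⟩ := exists_dual_vector ℂ (jL x) (norm_ne_zero_iff.mpr hx')
      refine ⟨g.toLinearMap.comp jL, fun y => ?_, ?_⟩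
      · have h1 := g.le_opNorm (jL y)
        rw [hg1, one_mul, hnorm] at h1
        exact h1
      · have h2 : (g.toLinearMap.comp jL) x = g (jL x) := rfl
        rw [h2, hgx, RCLike.norm_ofReal, hnorm, _root_.abs_of_nonneg (h.nonneg x)]
  · set T : V →L[ℂ] NormCopy V N := LinearMap.toContinuousLinearMap jL
    refine ⟨‖T‖ + 1, by positivity, fun y => ?_⟩
    have h1 := T.le_opNorm y
    have h2 : ‖T y‖ = N y := hnorm y
    nlinarith [norm_nonneg y, norm_nonneg T]
  · set T : NormCopy V N →L[ℂ] V := LinearMap.toContinuousLinearMap kL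
    refine ⟨‖T‖ + 1, by positivity, fun y => ?_⟩
    have h1 := T.le_opNorm (jL y)
    have h2 : T (jL y) = y := rfl
    rw [h2, hnorm] at h1
    nlinarith [h.nonneg y, norm_nonneg T]

section ISet
variable {V : Type*} [NormedAddCommGroup V] [NormedSpace ℂ V]

/-- The admissible-value set defining `interpNorm`. -/
def ISet (N₀ N₁ : V → ℝ) (θ : ℝ) (x : V) : Set ℝ :=
  {M : ℝ | ∃ f : ℂ → V,
    (∃ C : ℝ, ∀ z ∈ closedStrip, ‖f z‖ ≤ C) ∧
    ContinuousOn f closedStrip ∧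
    DifferentiableOn ℂ f openStrip ∧
    f (θ : ℂ) = x ∧
    M = max (⨆ t : ℝ, N₀ (f (Complex.I * t))) (⨆ t : ℝ, N₁ (f (1 + Complex.I * t)))}

lemma interpNorm_eq (N₀ N₁ : V → ℝ) (θ : ℝ) (x : V) :
    interpNorm N₀ N₁ θ x = sInf (ISet N₀ N₁ θ x) := rfl

lemma ISet_nonneg {N₀ N₁ : V → ℝ} (h₀ : IsNorm V N₀) (h₁ : IsNorm V N₁) {θ : ℝ} {x : V}
    {M : ℝ} (hM : M ∈ ISet N₀ N₁ θ x) : 0 ≤ M := by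
  obtain ⟨f, -, -, -, -, rfl⟩ := hM
  exact le_max_of_le_left (Real.iSup_nonneg fun t => h₀.nonneg _)

lemma ISet_bddBelow {N₀ N₁ : V → ℝ} (h₀ : IsNorm V N₀) (h₁ : IsNorm V N₁) (θ : ℝ) (x : V) :
    BddBelow (ISet N₀ N₁ θ x) :=
  ⟨0, fun _ hM => ISet_nonneg h₀ h₁ hM⟩

lemma const_mem_ISet (N₀ N₁ : V → ℝ) (θ : ℝ) (x : V) :
    max (N₀ x) (N₁ x) ∈ ISet N₀ N₁ θ x := by
  refine ⟨fun _ => x, ⟨‖x‖, fun z _ => le_refl _⟩, continuousOn_const,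
    differentiableOn_const x, rfl, ?_⟩
  simp [ciSup_const]

lemma ISet_nonempty (N₀ N₁ : V → ℝ) (θ : ℝ) (x : V) : (ISet N₀ N₁ θ x).Nonempty :=
  ⟨_, const_mem_ISet N₀ N₁ θ x⟩

/-- The exponential witness giving the upper bound. -/
lemma exp_mem_ISet {N₀ N₁ : V → ℝ} (h₀ : IsNorm V N₀) (h₁ : IsNorm V N₁)
    {x : V} (hx₀ : 0 < N₀ x) (hx₁ : 0 < N₁ x) (θ : ℝ) :
    Real.exp (-((Real.log (N₀ x) - Real.log (N₁ x)) * θ)) * N₀ x ∈ ISet N₀ N₁ θ x := by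
  set c : ℝ := Real.log (N₀ x) - Real.log (N₁ x) with hc
  refine ⟨fun z => Complex.exp ((c : ℂ) * (z - (θ : ℂ))) • x, ?_, ?_, ?_, ?_, ?_⟩
  · refine ⟨Real.exp (|c| * (1 + |θ|)) * ‖x‖, fun z hz => ?_⟩
    rw [norm_smul, Complex.norm_exp]
    have hre : ((c : ℂ) * (z - (θ : ℂ))).re = c * (z.re - θ) := by simp
    rw [hre]
    have h1 : c * (z.re - θ) ≤ |c| * (1 + |θ|) := by
      calc c * (z.re - θ) ≤ |c * (z.re - θ)| := le_abs_self _
        _ = |c| * |z.re - θ| := abs_mul _ _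
        _ ≤ |c| * (1 + |θ|) := by
            apply mul_le_mul_of_nonneg_left _ (abs_nonneg c)
            calc |z.re - θ| ≤ |z.re| + |θ| := abs_sub _ _
              _ ≤ 1 + |θ| := by
                  have := hz.1; have := hz.2
                  have : |z.re| ≤ 1 := abs_le.mpr ⟨by linarith [hz.1], hz.2⟩
                  linarith
    exact mul_le_mul_of_nonneg_right (Real.exp_le_exp.mpr h1) (norm_nonneg x)
  · exact (Continuous.smul (Complex.continuous_exp.comp (by continuity)) continuous_const).continuousOn
  · exact (Differentiable.smul ((Complex.differentiable_exp).comp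
      ((differentiable_id.sub_const _).const_mul _)) (differentiable_const x)).differentiableOn
  · simp
  · have e₀ : ∀ t : ℝ, N₀ ((fun z => Complex.exp ((c : ℂ) * (z - (θ : ℂ))) • x) (Complex.I * t))
        = Real.exp (-(c * θ)) * N₀ x := by
      intro t
      rw [h₀.smul, Complex.norm_exp]
      congr 2
      simp
    have e₁ : ∀ t : ℝ, N₁ ((fun z => Complex.exp ((c : ℂ) * (z - (θ : ℂ))) • x) (1 + Complex.I * t))
        = Real.exp (c * (1 - θ)) * N₁ x := by
      intro t
      rw [h₁.smul, Complex.norm_exp]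
      congr 2
      simp
    have key : Real.exp (c * (1 - θ)) * N₁ x = Real.exp (-(c * θ)) * N₀ x := by
      have : c * (1 - θ) = c + -(c * θ) := by ring
      rw [this, Real.exp_add, hc, Real.exp_sub, Real.exp_log hx₀, Real.exp_log hx₁]
      field_simp
    simp only [e₀, e₁, ciSup_const, key, max_self]

end ISet

section KeyLower
lemma key_lower {V : Type*} [NormedAddCommGroup V] [NormedSpace ℂ V] [FiniteDimensional ℂ V]
    {N₀ N₁ : V → ℝ} (h₀ : IsNorm V N₀) (h₁ : IsNorm V N₁)
    (φ : V →ₗ[ℂ] ℂ) {D₀ D₁ : ℝ} (hD₀ : 0 ≤ D₀) (hD₁ : 0 ≤ D₁)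
    (hφ0 : ∀ y, ‖φ y‖ ≤ D₀ * N₀ y) (hφ1 : ∀ y, ‖φ y‖ ≤ D₁ * N₁ y)
    {θ : ℝ} (hθ0 : 0 ≤ θ) (hθ1 : θ ≤ 1) {x : V} {M : ℝ}
    (hM : M ∈ ISet N₀ N₁ θ x)
    (hcmp₀ : ∃ C, 0 < C ∧ ∀ y, N₀ y ≤ C * ‖y‖)
    (hcmp₁ : ∃ C, 0 < C ∧ ∀ y, N₁ y ≤ C * ‖y‖) :
    ‖φ x‖ ≤ (D₀ ^ (1 - θ) * D₁ ^ θ) * M := by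
  obtain ⟨C₀, hC₀pos, hC₀⟩ := hcmp₀
  obtain ⟨C₁, hC₁pos, hC₁⟩ := hcmp₁
  obtain ⟨f, ⟨C, hC⟩, hcont, hdiff, hfθ, rfl⟩ := hM
  set a : ℝ := ⨆ t : ℝ, N₀ (f (Complex.I * t)) with ha_def
  set b : ℝ := ⨆ t : ℝ, N₁ (f (1 + Complex.I * t)) with hb_def
  have hmem0 : ∀ t : ℝ, (Complex.I * (t : ℂ)) ∈ closedStrip := by
    intro t; constructor <;> simp
  have hmem1 : ∀ t : ℝ, ((1 : ℂ) + Complex.I * (t : ℂ)) ∈ closedStrip := by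
    intro t; constructor <;> simp
  have hba : BddAbove (range fun t : ℝ => N₀ (f (Complex.I * t))) := by
    refine ⟨C₀ * C, ?_⟩
    rintro r ⟨t, rfl⟩
    exact (hC₀ _).trans (mul_le_mul_of_nonneg_left (hC _ (hmem0 t)) hC₀pos.le)
  have hbb : BddAbove (range fun t : ℝ => N₁ (f (1 + Complex.I * t))) := by
    refine ⟨C₁ * C, ?_⟩
    rintro r ⟨t, rfl⟩
    exact (hC₁ _).trans (mul_le_mul_of_nonneg_left (hC _ (hmem1 t)) hC₁pos.le)
  have ha0 : 0 ≤ a := Real.iSup_nonneg fun t => h₀.nonneg _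
  have hb0 : 0 ≤ b := Real.iSup_nonneg fun t => h₁.nonneg _
  set φc : V →L[ℂ] ℂ := LinearMap.toContinuousLinearMap φ with hφc
  set h : ℂ → ℂ := fun z => φ (f z) with hh
  have hvs : Complex.HadamardThreeLines.verticalStrip 0 1 = openStrip := Set.ext fun z => Iff.rfl
  have hvcs : Complex.HadamardThreeLines.verticalClosedStrip 0 1 = closedStrip := Set.ext fun z => Iff.rfl
  have hclos : closure (Complex.HadamardThreeLines.verticalStrip 0 1) = Complex.HadamardThreeLines.verticalClosedStrip 0 1 := by
    rw [Complex.HadamardThreeLines.verticalStrip, Complex.HadamardThreeLines.verticalClosedStrip, Complex.closure_preimage_re,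
      closure_Ioo (zero_ne_one' ℝ)]
  have hd : DiffContOnCl ℂ h (Complex.HadamardThreeLines.verticalStrip 0 1) := by
    constructor
    · rw [hvs]
      exact φc.differentiable.comp_differentiableOn hdiff
    · rw [hclos, hvcs]
      exact φc.continuous.comp_continuousOn hcont
  have hB : BddAbove ((norm ∘ h) '' Complex.HadamardThreeLines.verticalClosedStrip 0 1) := by
    refine ⟨D₀ * (C₀ * C), ?_⟩
    rintro r ⟨z, hz, rfl⟩
    rw [hvcs] at hz
    calc (norm ∘ h) z = ‖φ (f z)‖ := rfl
      _ ≤ D₀ * N₀ (f z) := hφ0 _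
      _ ≤ D₀ * (C₀ * C) := by
          refine mul_le_mul_of_nonneg_left ?_ hD₀
          exact (hC₀ _).trans (mul_le_mul_of_nonneg_left (hC _ hz) hC₀pos.le)
  have hathm : ∀ z ∈ Complex.re ⁻¹' {(0 : ℝ)}, ‖h z‖ ≤ D₀ * a := by
    intro z hz
    have hz0 : z.re = 0 := hz
    have hzeq : z = Complex.I * (z.im : ℂ) := by
      apply Complex.ext <;> simp [hz0]
    calc ‖φ (f z)‖ ≤ D₀ * N₀ (f z) := hφ0 _
      _ ≤ D₀ * a := by
          refine mul_le_mul_of_nonneg_left ?_ hD₀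
          conv_lhs => rw [hzeq]
          exact le_ciSup hba z.im
  have hbthm : ∀ z ∈ Complex.re ⁻¹' {(1 : ℝ)}, ‖h z‖ ≤ D₁ * b := by
    intro z hz
    have hz1 : z.re = 1 := hz
    have hzeq : z = 1 + Complex.I * (z.im : ℂ) := by
      apply Complex.ext <;> simp [hz1]
    calc ‖φ (f z)‖ ≤ D₁ * N₁ (f z) := hφ1 _
      _ ≤ D₁ * b := by
          refine mul_le_mul_of_nonneg_left ?_ hD₁
          conv_lhs => rw [hzeq]
          exact le_ciSup hbb z.im
  have hzmem : (θ : ℂ) ∈ Complex.HadamardThreeLines.verticalClosedStrip 0 1 := by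
    simp only [Complex.HadamardThreeLines.verticalClosedStrip, Set.mem_preimage, Complex.ofReal_re, Set.mem_Icc]
    exact ⟨hθ0, hθ1⟩
  have h3 := Complex.HadamardThreeLines.norm_le_interp_of_mem_verticalClosedStrip' (f := h) zero_lt_one
    hzmem hd hB hathm hbthm
  simp only [Complex.ofReal_re, sub_zero, div_one] at h3
  have hhx : h (θ : ℂ) = φ x := by rw [hh]; simp [hfθ]
  rw [hhx] at h3
  have hM0 : (0 : ℝ) ≤ max a b := le_trans ha0 (le_max_left a b)
  have hab : a ^ (1 - θ) * b ^ θ ≤ max a b := by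
    calc a ^ (1 - θ) * b ^ θ ≤ (max a b) ^ (1 - θ) * (max a b) ^ θ := by
          refine mul_le_mul (Real.rpow_le_rpow ha0 (le_max_left a b) (by linarith))
            (Real.rpow_le_rpow hb0 (le_max_right a b) hθ0)
            (Real.rpow_nonneg hb0 _) (Real.rpow_nonneg hM0 _)
      _ = max a b := by
          rw [← Real.rpow_add_of_nonneg hM0 (by linarith) hθ0]
          rw [show (1 - θ) + θ = (1 : ℝ) by ring, Real.rpow_one]
  calc ‖φ x‖ ≤ (D₀ * a) ^ (1 - θ) * (D₁ * b) ^ θ := h3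
    _ = (D₀ ^ (1 - θ) * D₁ ^ θ) * (a ^ (1 - θ) * b ^ θ) := by
        rw [Real.mul_rpow hD₀ ha0, Real.mul_rpow hD₁ hb0]; ring
    _ ≤ (D₀ ^ (1 - θ) * D₁ ^ θ) * max a b := by
        refine mul_le_mul_of_nonneg_left hab ?_
        positivity
end KeyLower

/-- Proposition 3.10 (finite-dimensional case): for a finite-dimensional complex vector space `V`
equipped with two norms `N₀, N₁`, the complex interpolation norms satisfy
`lim_{θ→0⁺} ‖x‖_θ = N₀ x` and `lim_{θ→1⁻} ‖x‖_θ = N₁ x` for every `x ∈ V`. -/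
theorem finiteDimensional_norm_continuous_at_endpoints
    {V : Type*} [NormedAddCommGroup V] [NormedSpace ℂ V] [FiniteDimensional ℂ V]
    (N₀ N₁ : V → ℝ) (h₀ : IsNorm V N₀) (h₁ : IsNorm V N₁) (x : V) :
    Tendsto (fun θ : ℝ => interpNorm N₀ N₁ θ x) (𝓝[>] (0 : ℝ)) (𝓝 (N₀ x)) ∧
    Tendsto (fun θ : ℝ => interpNorm N₀ N₁ θ x) (𝓝[<] (1 : ℝ)) (𝓝 (N₁ x)) := by
  by_cases hx : x = 0
  · have hx0 : N₀ x = 0 := (h₀.eq_zero_iff x).mpr hx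
    have hx1 : N₁ x = 0 := (h₁.eq_zero_iff x).mpr hx
    have hzero : ∀ θ : ℝ, interpNorm N₀ N₁ θ x = 0 := by
      intro θ
      rw [interpNorm_eq]
      apply le_antisymm
      · have hm := const_mem_ISet N₀ N₁ θ x
        rw [hx0, hx1] at hm
        simpa using csInf_le (ISet_bddBelow h₀ h₁ θ x) hm
      · exact le_csInf (ISet_nonempty _ _ _ _) fun M hM => ISet_nonneg h₀ h₁ hM
    constructor
    · rw [hx0]; simp only [hzero]; exact tendsto_const_nhds
    · rw [hx1]; simp only [hzero]; exact tendsto_const_nhds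
  · have hN₀x : 0 < N₀ x :=
      (h₀.nonneg x).lt_of_ne fun h => hx ((h₀.eq_zero_iff x).mp h.symm)
    have hN₁x : 0 < N₁ x :=
      (h₁.nonneg x).lt_of_ne fun h => hx ((h₁.eq_zero_iff x).mp h.symm)
    obtain ⟨⟨φ, hφle, hφx⟩, ⟨C₀, hC₀pos, hC₀⟩, ⟨c₀, hc₀pos, hc₀⟩⟩ := h₀.copy_facts x
    obtain ⟨⟨ψ, hψle, hψx⟩, ⟨C₁, hC₁pos, hC₁⟩, ⟨c₁, hc₁pos, hc₁⟩⟩ := h₁.copy_facts x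
    set c : ℝ := Real.log (N₀ x) - Real.log (N₁ x) with hc
    have hupper : ∀ θ : ℝ, interpNorm N₀ N₁ θ x ≤ Real.exp (-(c * θ)) * N₀ x := fun θ =>
      csInf_le (ISet_bddBelow h₀ h₁ θ x) (exp_mem_ISet h₀ h₁ hN₀x hN₁x θ)
    have hkey : Real.exp c * N₁ x = N₀ x := by
      rw [hc, Real.exp_sub, Real.exp_log hN₀x, Real.exp_log hN₁x]
      field_simp
    have hupper1 : ∀ θ : ℝ, interpNorm N₀ N₁ θ x ≤ Real.exp (c * (1 - θ)) * N₁ x := by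
      intro θ
      have e : Real.exp (c * (1 - θ)) * N₁ x = Real.exp (-(c * θ)) * N₀ x := by
        calc Real.exp (c * (1 - θ)) * N₁ x
            = Real.exp (-(c * θ)) * (Real.exp c * N₁ x) := by
              rw [show c * (1 - θ) = -(c * θ) + c by ring, Real.exp_add]; ring
          _ = Real.exp (-(c * θ)) * N₀ x := by rw [hkey]
      rw [e]; exact hupper θ
    -- lower bound data
    set D₁ : ℝ := C₀ * c₁ with hD₁def
    have hD₁pos : 0 < D₁ := mul_pos hC₀pos hc₁pos
    have hφ1 : ∀ y, ‖φ y‖ ≤ D₁ * N₁ y := by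
      intro y
      calc ‖φ y‖ ≤ N₀ y := hφle y
        _ ≤ C₀ * ‖y‖ := hC₀ y
        _ ≤ C₀ * (c₁ * N₁ y) := mul_le_mul_of_nonneg_left (hc₁ y) hC₀pos.le
        _ = D₁ * N₁ y := by rw [hD₁def]; ring
    set D₀ : ℝ := C₁ * c₀ with hD₀def
    have hD₀pos : 0 < D₀ := mul_pos hC₁pos hc₀pos
    have hψ0 : ∀ y, ‖ψ y‖ ≤ D₀ * N₀ y := by
      intro y
      calc ‖ψ y‖ ≤ N₁ y := hψle y
        _ ≤ C₁ * ‖y‖ := hC₁ y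
        _ ≤ C₁ * (c₀ * N₀ y) := mul_le_mul_of_nonneg_left (hc₀ y) hC₁pos.le
        _ = D₀ * N₀ y := by rw [hD₀def]; ring
    have hlow0 : ∀ θ : ℝ, 0 < θ → θ < 1 →
        N₀ x * Real.exp (-(Real.log D₁ * θ)) ≤ interpNorm N₀ N₁ θ x := by
      intro θ hθ0 hθ1
      rw [interpNorm_eq]
      refine le_csInf (ISet_nonempty _ _ _ _) fun M hM => ?_
      have h3 := key_lower h₀ h₁ φ zero_le_one hD₁pos.le
        (fun y => by rw [one_mul]; exact hφle y) hφ1 hθ0.le hθ1.le hM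
        ⟨C₀, hC₀pos, hC₀⟩ ⟨C₁, hC₁pos, hC₁⟩
      rw [Real.one_rpow, one_mul, hφx] at h3
      have hpow : D₁ ^ θ = Real.exp (Real.log D₁ * θ) := Real.rpow_def_of_pos hD₁pos θ
      have hDpos : 0 < D₁ ^ θ := Real.rpow_pos_of_pos hD₁pos θ
      calc N₀ x * Real.exp (-(Real.log D₁ * θ)) = N₀ x * (D₁ ^ θ)⁻¹ := by
            rw [Real.exp_neg, hpow]
        _ ≤ (D₁ ^ θ * M) * (D₁ ^ θ)⁻¹ :=
            mul_le_mul_of_nonneg_right h3 (inv_nonneg.mpr hDpos.le)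
        _ = M := by field_simp
    have hlow1 : ∀ θ : ℝ, 0 < θ → θ < 1 →
        N₁ x * Real.exp (-(Real.log D₀ * (1 - θ))) ≤ interpNorm N₀ N₁ θ x := by
      intro θ hθ0 hθ1
      rw [interpNorm_eq]
      refine le_csInf (ISet_nonempty _ _ _ _) fun M hM => ?_
      have h3 := key_lower h₀ h₁ ψ hD₀pos.le zero_le_one hψ0
        (fun y => by rw [one_mul]; exact hψle y) hθ0.le hθ1.le hM
        ⟨C₀, hC₀pos, hC₀⟩ ⟨C₁, hC₁pos, hC₁⟩
      rw [Real.one_rpow, mul_one, hψx] at h3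
      have hpow : D₀ ^ (1 - θ) = Real.exp (Real.log D₀ * (1 - θ)) :=
        Real.rpow_def_of_pos hD₀pos _
      have hDpos : 0 < D₀ ^ (1 - θ) := Real.rpow_pos_of_pos hD₀pos _
      calc N₁ x * Real.exp (-(Real.log D₀ * (1 - θ))) = N₁ x * (D₀ ^ (1 - θ))⁻¹ := by
            rw [Real.exp_neg, hpow]
        _ ≤ (D₀ ^ (1 - θ) * M) * (D₀ ^ (1 - θ))⁻¹ :=
            mul_le_mul_of_nonneg_right h3 (inv_nonneg.mpr hDpos.le)
        _ = M := by field_simp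
    constructor
    · refine tendsto_of_tendsto_of_tendsto_of_le_of_le'
        (g := fun θ : ℝ => N₀ x * Real.exp (-(Real.log D₁ * θ)))
        (h := fun θ : ℝ => Real.exp (-(c * θ)) * N₀ x) ?_ ?_ ?_ ?_
      · -- lower tendsto
        have hcont : Continuous (fun θ : ℝ => N₀ x * Real.exp (-(Real.log D₁ * θ))) := by
          fun_prop
        have h' : Tendsto (fun θ : ℝ => N₀ x * Real.exp (-(Real.log D₁ * θ))) (𝓝[>] (0 : ℝ))
            (𝓝 (N₀ x * Real.exp (-(Real.log D₁ * 0)))) :=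
          (hcont.tendsto 0).mono_left nhdsWithin_le_nhds
        simpa using h'
      · have hcont : Continuous (fun θ : ℝ => Real.exp (-(c * θ)) * N₀ x) := by
          fun_prop
        have h' : Tendsto (fun θ : ℝ => Real.exp (-(c * θ)) * N₀ x) (𝓝[>] (0 : ℝ))
            (𝓝 (Real.exp (-(c * 0)) * N₀ x)) :=
          (hcont.tendsto 0).mono_left nhdsWithin_le_nhds
        simpa using h'
      · filter_upwards [Ioo_mem_nhdsGT_of_mem
          (⟨le_refl (0 : ℝ), zero_lt_one⟩ : (0 : ℝ) ∈ Ico (0 : ℝ) 1)] with θ hθ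
        exact hlow0 θ hθ.1 hθ.2
      · exact Eventually.of_forall hupper
    · refine tendsto_of_tendsto_of_tendsto_of_le_of_le'
        (g := fun θ : ℝ => N₁ x * Real.exp (-(Real.log D₀ * (1 - θ))))
        (h := fun θ : ℝ => Real.exp (c * (1 - θ)) * N₁ x) ?_ ?_ ?_ ?_
      · have hcont : Continuous (fun θ : ℝ => N₁ x * Real.exp (-(Real.log D₀ * (1 - θ)))) := by
          fun_prop
        have h' : Tendsto (fun θ : ℝ => N₁ x * Real.exp (-(Real.log D₀ * (1 - θ)))) (𝓝[<] (1 : ℝ))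
            (𝓝 (N₁ x * Real.exp (-(Real.log D₀ * (1 - 1))))) :=
          (hcont.tendsto 1).mono_left nhdsWithin_le_nhds
        simpa using h'
      · have hcont : Continuous (fun θ : ℝ => Real.exp (c * (1 - θ)) * N₁ x) := by
          fun_prop
        have h' : Tendsto (fun θ : ℝ => Real.exp (c * (1 - θ)) * N₁ x) (𝓝[<] (1 : ℝ))
            (𝓝 (Real.exp (c * (1 - 1)) * N₁ x)) :=
          (hcont.tendsto 1).mono_left nhdsWithin_le_nhds
        simpa using h'
      · filter_upwards [Ioo_mem_nhdsLT_of_mem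
          (⟨zero_lt_one, le_refl (1 : ℝ)⟩ : (1 : ℝ) ∈ Ioc (0 : ℝ) 1)] with θ hθ
        exact hlow1 θ hθ.1 hθ.2
      · exact Eventually.of_forall hupper1
end
end

section
/- Let V be a finite-dimensional complex vector space equipped with two norms N₀ and N₁, viewed as the compatible couple X₀ = X₁ = V inside U = V, and let K(x,t) denote the associated K-functional. Then for every x ∈ V one has lim_{t→∞} K(x,t) = N₀(x) and lim_{t→0⁺} K(x,t)/t = N₁(x); that is, every finite-dimensional compatible couple is normal at every point. -/
open Set Filter Topology

noncomputable section

/-- The K-functional of the couple `X₀ = X₁ = V` with norms `N₀, N₁`: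
`K(x,t) = inf { N₀ x₀ + t·N₁ x₁ : x₀ + x₁ = x }`. -/
def Kfunctional {V : Type*} [AddCommGroup V] [Module ℂ V]
    (N₀ N₁ : V → ℝ) (x : V) (t : ℝ) : ℝ :=
  sInf {v : ℝ | ∃ x₀ x₁ : V, x₀ + x₁ = x ∧ v = N₀ x₀ + t * N₁ x₁}

/-!
In finite dimension the two norms are equivalent: `N₀ ≤ C₀ N₁` and `N₁ ≤ C₁ N₀`. For `t ≥ C₀` the
trivial splitting `x = x + 0` is optimal, because `N₀ x ≤ N₀ x₀ + N₀ x₁ ≤ N₀ x₀ + t N₁ x₁`, so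
`K(x,t) = N₀ x`; symmetrically, for `t C₁ ≤ 1` the splitting `x = 0 + x` is optimal and
`K(x,t) = t N₁ x`. Both limits are therefore limits of eventually constant functions.
-/

namespace IsNorm

variable {V : Type*} [AddCommGroup V] [Module ℂ V] {N : V → ℝ}

lemma map_zero (h : IsNorm V N) : N 0 = 0 := (h.eq_zero_iff 0).mpr rfl

lemma map_neg (h : IsNorm V N) (x : V) : N (-x) = N x := by
  simpa using h.smul (-1) x

lemma nonneg_s1 (h : IsNorm V N) (x : V) : 0 ≤ N x := by
  have := h.add_le x (-x)
  rw [add_neg_cancel, h.map_zero, h.map_neg] at this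
  linarith

/-- A copy of `V` normed by `N`, so that several norms on `V` can be instances at once. -/
def WithNorm (V : Type*) (_N : V → ℝ) : Type _ := V

instance : AddCommGroup (WithNorm V N) := inferInstanceAs (AddCommGroup V)
instance : Module ℂ (WithNorm V N) := inferInstanceAs (Module ℂ V)
instance [FiniteDimensional ℂ V] : FiniteDimensional ℂ (WithNorm V N) :=
  inferInstanceAs (FiniteDimensional ℂ V)
instance : Norm (WithNorm V N) := ⟨N⟩

lemma normedSpaceCore (h : IsNorm V N) : NormedSpace.Core ℂ (WithNorm V N) where
  norm_nonneg := h.nonneg_s1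
  norm_smul := h.smul
  norm_triangle := h.add_le
  norm_eq_zero_iff := h.eq_zero_iff

lemma exists_le_mul [FiniteDimensional ℂ V] {N₀ N₁ : V → ℝ}
    (h₀ : IsNorm V N₀) (h₁ : IsNorm V N₁) : ∃ C : ℝ, ∀ x, N₀ x ≤ C * N₁ x := by
  let := NormedAddCommGroup.ofCore h₀.normedSpaceCore
  let := NormedSpace.ofCore h₀.normedSpaceCore
  let := NormedAddCommGroup.ofCore h₁.normedSpaceCore
  let := NormedSpace.ofCore h₁.normedSpaceCore
  let e : WithNorm V N₁ →L[ℂ] WithNorm V N₀ := LinearMap.toContinuousLinearMap LinearMap.id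
  exact ⟨‖e‖, e.le_opNorm⟩

end IsNorm

section Kfunctional

variable {V : Type*} [AddCommGroup V] [Module ℂ V] {N₀ N₁ : V → ℝ} {x : V} {t : ℝ}

lemma Kfunctional_eq_of_forall_le {c : ℝ} (x₀ x₁ : V) (hsum : x₀ + x₁ = x)
    (hc : c = N₀ x₀ + t * N₁ x₁)
    (hle : ∀ y₀ y₁ : V, y₀ + y₁ = x → c ≤ N₀ y₀ + t * N₁ y₁) :
    Kfunctional N₀ N₁ x t = c :=
  IsLeast.csInf_eq ⟨⟨x₀, x₁, hsum, hc⟩, by rintro _ ⟨y₀, y₁, hy, rfl⟩; exact hle y₀ y₁ hy⟩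

lemma Kfunctional_eq_left_of_le (h₀ : IsNorm V N₀) (h₁ : IsNorm V N₁)
    (hle : ∀ y, N₀ y ≤ t * N₁ y) : Kfunctional N₀ N₁ x t = N₀ x := by
  refine Kfunctional_eq_of_forall_le x 0 (add_zero x) (by simp [h₁.map_zero]) ?_
  rintro y₀ y₁ rfl
  linarith [h₀.add_le y₀ y₁, hle y₁]

lemma Kfunctional_eq_right_of_le (h₀ : IsNorm V N₀) (h₁ : IsNorm V N₁) (ht : 0 ≤ t)
    (hle : ∀ y, t * N₁ y ≤ N₀ y) : Kfunctional N₀ N₁ x t = t * N₁ x := by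
  refine Kfunctional_eq_of_forall_le 0 x (zero_add x) (by simp [h₀.map_zero]) ?_
  rintro y₀ y₁ rfl
  have := mul_le_mul_of_nonneg_left (h₁.add_le y₀ y₁) ht
  linarith [hle y₀]

variable [FiniteDimensional ℂ V]

lemma eventually_Kfunctional_eq_left (h₀ : IsNorm V N₀) (h₁ : IsNorm V N₁) (x : V) :
    Kfunctional N₀ N₁ x =ᶠ[atTop] fun _ ↦ N₀ x := by
  obtain ⟨C, hC⟩ := h₀.exists_le_mul h₁
  filter_upwards [eventually_ge_atTop C] with t ht
  exact Kfunctional_eq_left_of_le h₀ h₁ fun y ↦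
    (hC y).trans (mul_le_mul_of_nonneg_right ht (h₁.nonneg_s1 y))

lemma eventually_Kfunctional_eq_right (h₀ : IsNorm V N₀) (h₁ : IsNorm V N₁) (x : V) :
    Kfunctional N₀ N₁ x =ᶠ[𝓝[>] 0] fun t ↦ t * N₁ x := by
  obtain ⟨C, hC⟩ := h₁.exists_le_mul h₀
  have hsmall : ∀ᶠ t in 𝓝[>] (0 : ℝ), t * C < 1 :=
    (((continuous_mul_const C).tendsto' 0 0 (zero_mul C)).eventually_lt_const
      one_pos).filter_mono nhdsWithin_le_nhds
  filter_upwards [hsmall, self_mem_nhdsWithin] with t htC (ht : 0 < t)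
  refine Kfunctional_eq_right_of_le h₀ h₁ ht.le fun y ↦ ?_
  calc t * N₁ y ≤ t * (C * N₀ y) := mul_le_mul_of_nonneg_left (hC y) ht.le
    _ = (t * C) * N₀ y := by ring
    _ ≤ N₀ y := mul_le_of_le_one_left (h₀.nonneg_s1 y) htC.le

end Kfunctional

/-- Every finite-dimensional compatible couple is normal at every point:
for a finite-dimensional complex vector space `V` with two norms `N₀, N₁`, viewed as the
compatible couple `X₀ = X₁ = V`, one has `lim_{t→∞} K(x,t) = N₀ x` and
`lim_{t→0⁺} K(x,t)/t = N₁ x` for every `x ∈ V`. -/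
theorem finiteDimensional_couple_normal
    {V : Type*} [AddCommGroup V] [Module ℂ V] [FiniteDimensional ℂ V]
    (N₀ N₁ : V → ℝ) (h₀ : IsNorm V N₀) (h₁ : IsNorm V N₁) (x : V) :
    Tendsto (fun t : ℝ => Kfunctional N₀ N₁ x t) atTop (𝓝 (N₀ x)) ∧
    Tendsto (fun t : ℝ => Kfunctional N₀ N₁ x t / t) (𝓝[>] (0 : ℝ)) (𝓝 (N₁ x)) := by
  refine ⟨tendsto_const_nhds.congr' (eventually_Kfunctional_eq_left h₀ h₁ x).symm,
    tendsto_const_nhds.congr' ?_⟩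
  filter_upwards [eventually_Kfunctional_eq_right h₀ h₁ x, self_mem_nhdsWithin]
    with t hK (ht : 0 < t)
  rw [hK, mul_div_cancel_left₀ _ ht.ne']
end
end

section
/- Let θ ∈ (0,1), let w₀, w₁ > 0 be real numbers, and let x ∈ ℂ. Then the infimum of max( w₀·sup_{t∈ℝ} |f(it)|, w₁·sup_{t∈ℝ} |f(1+it)| ) over all functions f : ℂ → ℂ that are bounded on the closed strip 𝕊, continuous on 𝕊, holomorphic on the open strip, and satisfy f(θ) = x, equals w₀^{1−θ}·w₁^{θ}·|x|. (That is, the complex interpolation space at parameter θ of the weighted couple ((ℂ, w₀|·|), (ℂ, w₁|·|)) is (ℂ, w₀^{1−θ}w₁^{θ}|·|); in particular the weighted spaces X_{n,t} = (ℂ, e^{−nt}|·|) form a complex interpolation scale.) -/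
open Complex Set Real

noncomputable section

lemma strip_eq : closedStrip = Complex.HadamardThreeLines.verticalClosedStrip 0 1 := by
  ext z
  simp [closedStrip, Complex.HadamardThreeLines.verticalClosedStrip, Set.mem_Icc]

lemma openStrip_eq : openStrip = Complex.HadamardThreeLines.verticalStrip 0 1 := by
  ext z
  simp [openStrip, Complex.HadamardThreeLines.verticalStrip, Set.mem_Ioo]

lemma closure_vstrip :
    closure (Complex.HadamardThreeLines.verticalStrip 0 1)
      = Complex.HadamardThreeLines.verticalClosedStrip 0 1 := by
  rw [Complex.HadamardThreeLines.verticalClosedStrip, ← closure_Ioo zero_ne_one,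
    ← Complex.closure_preimage_re]
  rfl

/-- The key lower bound: for any admissible `f`, the weighted geometric mean of the weights
times `|f θ|` is at most the max of the weighted edge suprema. -/
lemma lower_bound (θ : ℝ) (hθ : θ ∈ Set.Ioo (0 : ℝ) 1)
    (w₀ w₁ : ℝ) (h₀ : 0 < w₀) (h₁ : 0 < w₁) (f : ℂ → ℂ) (C : ℝ)
    (hC : ∀ z ∈ closedStrip, ‖f z‖ ≤ C)
    (hcont : ContinuousOn f closedStrip)
    (hdiff : DifferentiableOn ℂ f openStrip) :
    w₀ ^ (1 - θ) * w₁ ^ θ * ‖f (θ : ℂ)‖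
      ≤ max (w₀ * ⨆ t : ℝ, ‖f (Complex.I * t)‖)
            (w₁ * ⨆ t : ℝ, ‖f (1 + Complex.I * t)‖) := by
  set A : ℝ := ⨆ t : ℝ, ‖f (Complex.I * t)‖ with hA
  set B : ℝ := ⨆ t : ℝ, ‖f (1 + Complex.I * t)‖ with hB
  have hmem0 : ∀ t : ℝ, (Complex.I * t) ∈ closedStrip := by
    intro t; constructor <;> simp [closedStrip]
  have hmem1 : ∀ t : ℝ, (1 + Complex.I * t) ∈ closedStrip := by
    intro t; constructor <;> simp [closedStrip]
  have bddA : BddAbove (Set.range fun t : ℝ => ‖f (Complex.I * t)‖) := by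
    refine ⟨C, ?_⟩; rintro _ ⟨t, rfl⟩; exact hC _ (hmem0 t)
  have bddB : BddAbove (Set.range fun t : ℝ => ‖f (1 + Complex.I * t)‖) := by
    refine ⟨C, ?_⟩; rintro _ ⟨t, rfl⟩; exact hC _ (hmem1 t)
  have hA0 : 0 ≤ A :=
    le_trans (norm_nonneg _) (le_ciSup bddA (0 : ℝ))
  have hB0 : 0 ≤ B :=
    le_trans (norm_nonneg _) (le_ciSup bddB (0 : ℝ))
  -- Hadamard three lines
  have hz : (θ : ℂ) ∈ Complex.HadamardThreeLines.verticalClosedStrip 0 1 := by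
    simp only [Complex.HadamardThreeLines.verticalClosedStrip, Set.mem_preimage,
      Complex.ofReal_re, Set.mem_Icc]
    exact ⟨hθ.1.le, hθ.2.le⟩
  have hd : DiffContOnCl ℂ f (Complex.HadamardThreeLines.verticalStrip 0 1) := by
    refine ⟨by rw [← openStrip_eq]; exact hdiff, ?_⟩
    rw [closure_vstrip, ← strip_eq]; exact hcont
  have hBdd : BddAbove ((norm ∘ f) '' Complex.HadamardThreeLines.verticalClosedStrip 0 1) := by
    refine ⟨C, ?_⟩; rintro _ ⟨z, hzmem, rfl⟩
    exact hC z (by rw [strip_eq]; exact hzmem)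
  have ha : ∀ z ∈ Complex.re ⁻¹' {0}, ‖f z‖ ≤ A := by
    intro z hzre
    have hzeq : z = Complex.I * (z.im : ℂ) := by
      apply Complex.ext <;> simp [Set.mem_preimage, Set.mem_singleton_iff] at hzre ⊢
      exact hzre
    rw [hzeq]
    exact le_ciSup bddA z.im
  have hb : ∀ z ∈ Complex.re ⁻¹' {1}, ‖f z‖ ≤ B := by
    intro z hzre
    have hzeq : z = 1 + Complex.I * (z.im : ℂ) := by
      apply Complex.ext <;> simp [Set.mem_preimage, Set.mem_singleton_iff] at hzre ⊢
      exact hzre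
    rw [hzeq]
    exact le_ciSup bddB z.im
  have hHad := Complex.HadamardThreeLines.norm_le_interp_of_mem_verticalClosedStrip'
    zero_lt_one hz hd hBdd ha hb
  rw [Complex.ofReal_re, sub_zero, sub_zero, div_one] at hHad
  -- combine
  have h1θ : 0 ≤ 1 - θ := by linarith [hθ.2]
  have hθ0 : 0 ≤ θ := hθ.1.le
  have step1 : w₀ ^ (1 - θ) * w₁ ^ θ * ‖f (θ : ℂ)‖
      ≤ (w₀ * A) ^ (1 - θ) * (w₁ * B) ^ θ := by
    rw [Real.mul_rpow h₀.le hA0, Real.mul_rpow h₁.le hB0]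
    have : w₀ ^ (1 - θ) * A ^ (1 - θ) * (w₁ ^ θ * B ^ θ)
        = w₀ ^ (1 - θ) * w₁ ^ θ * (A ^ (1 - θ) * B ^ θ) := by ring
    rw [this]
    apply mul_le_mul_of_nonneg_left hHad
    positivity
  refine step1.trans ?_
  set M : ℝ := max (w₀ * A) (w₁ * B) with hM
  have hM0 : 0 ≤ M := le_trans (by positivity) (le_max_left _ _)
  calc (w₀ * A) ^ (1 - θ) * (w₁ * B) ^ θ
      ≤ M ^ (1 - θ) * M ^ θ := by
        apply mul_le_mul (Real.rpow_le_rpow (by positivity) (le_max_left _ _) h1θ)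
          (Real.rpow_le_rpow (by positivity) (le_max_right _ _) hθ0)
          (by positivity) (by positivity)
    _ = M := by
        rw [← Real.rpow_add' hM0 (by norm_num)]
        simp

/-- The complex interpolation space at parameter `θ` of the weighted couple
`((ℂ, w₀|·|), (ℂ, w₁|·|))` is `(ℂ, w₀^{1-θ} w₁^{θ} |·|)`: the infimum of
`max(w₀ sup_t |f(it)|, w₁ sup_t |f(1+it)|)` over all admissible `f` with `f θ = x`
equals `w₀^{1-θ} w₁^{θ} |x|`. -/
theorem weighted_scalar_interpolation
    (θ : ℝ) (hθ : θ ∈ Set.Ioo (0 : ℝ) 1)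
    (w₀ w₁ : ℝ) (h₀ : 0 < w₀) (h₁ : 0 < w₁) (x : ℂ) :
    sInf {M : ℝ | ∃ f : ℂ → ℂ,
      (∃ C : ℝ, ∀ z ∈ closedStrip, ‖f z‖ ≤ C) ∧
      ContinuousOn f closedStrip ∧
      DifferentiableOn ℂ f openStrip ∧
      f (θ : ℂ) = x ∧
      M = max (w₀ * ⨆ t : ℝ, ‖f (Complex.I * t)‖)
              (w₁ * ⨆ t : ℝ, ‖f (1 + Complex.I * t)‖)}
    = w₀ ^ (1 - θ) * w₁ ^ θ * ‖x‖ := by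
  set T : ℝ := w₀ ^ (1 - θ) * w₁ ^ θ * ‖x‖ with hT
  set r : ℝ := Real.log w₀ - Real.log w₁ with hr
  -- the witness function
  set g : ℂ → ℂ := fun z => x * Complex.exp ((z - (θ : ℂ)) * (r : ℂ)) with hg
  have habs : ∀ z : ℂ, ‖g z‖ = ‖x‖ * Real.exp ((z.re - θ) * r) := by
    intro z
    simp only [hg, norm_mul, Complex.norm_exp]
    congr 2
    simp [Complex.mul_re]
  -- edge values of g are constant
  have hedge0 : (⨆ t : ℝ, ‖g (Complex.I * t)‖)
      = ‖x‖ * Real.exp ((0 - θ) * r) := by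
    have : ∀ t : ℝ, ‖g (Complex.I * t)‖
        = ‖x‖ * Real.exp ((0 - θ) * r) := by
      intro t; rw [habs]; norm_num
    simp_rw [this]
    exact ciSup_const
  have hedge1 : (⨆ t : ℝ, ‖g (1 + Complex.I * t)‖)
      = ‖x‖ * Real.exp ((1 - θ) * r) := by
    have : ∀ t : ℝ, ‖g (1 + Complex.I * t)‖
        = ‖x‖ * Real.exp ((1 - θ) * r) := by
      intro t; rw [habs]; norm_num
    simp_rw [this]
    exact ciSup_const
  have key0 : w₀ * Real.exp ((0 - θ) * r) = w₀ ^ (1 - θ) * w₁ ^ θ := by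
    rw [Real.rpow_def_of_pos h₀, Real.rpow_def_of_pos h₁, ← Real.exp_add]
    nth_rewrite 1 [← Real.exp_log h₀]
    rw [← Real.exp_add]
    congr 1
    simp only [hr]; ring
  have key1 : w₁ * Real.exp ((1 - θ) * r) = w₀ ^ (1 - θ) * w₁ ^ θ := by
    rw [Real.rpow_def_of_pos h₀, Real.rpow_def_of_pos h₁, ← Real.exp_add]
    nth_rewrite 1 [← Real.exp_log h₁]
    rw [← Real.exp_add]
    congr 1
    simp only [hr]; ring
  have hgmem : T ∈ {M : ℝ | ∃ f : ℂ → ℂ,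
      (∃ C : ℝ, ∀ z ∈ closedStrip, ‖f z‖ ≤ C) ∧
      ContinuousOn f closedStrip ∧
      DifferentiableOn ℂ f openStrip ∧
      f (θ : ℂ) = x ∧
      M = max (w₀ * ⨆ t : ℝ, ‖f (Complex.I * t)‖)
              (w₁ * ⨆ t : ℝ, ‖f (1 + Complex.I * t)‖)} := by
    refine ⟨g, ⟨‖x‖ * Real.exp |r|, ?_⟩, ?_, ?_, ?_, ?_⟩
    · intro z hz
      rw [habs]
      apply mul_le_mul_of_nonneg_left _ (norm_nonneg _)
      apply Real.exp_le_exp.2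
      calc (z.re - θ) * r ≤ |(z.re - θ) * r| := le_abs_self _
        _ = |z.re - θ| * |r| := abs_mul _ _
        _ ≤ 1 * |r| := by
            apply mul_le_mul_of_nonneg_right _ (abs_nonneg r)
            rw [abs_le]
            constructor <;> [linarith [hz.1, hθ.2.le]; linarith [hz.2, hθ.1.le]]
        _ = |r| := one_mul _
    · have : Continuous g := by
        apply Continuous.mul continuous_const
        exact Complex.continuous_exp.comp (by fun_prop)
      exact this.continuousOn
    · have : Differentiable ℂ g := by
        apply Differentiable.mul (differentiable_const _)
        exact (Complex.differentiable_exp).comp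
          ((differentiable_id.sub_const _).mul_const _)
      exact this.differentiableOn
    · simp [hg]
    · rw [hedge0, hedge1, ← mul_assoc, ← mul_assoc,
        mul_comm w₀ (‖x‖), mul_comm w₁ (‖x‖), mul_assoc, mul_assoc,
        key0, key1, max_self, hT]
      ring
  have hlow : ∀ M ∈ {M : ℝ | ∃ f : ℂ → ℂ,
      (∃ C : ℝ, ∀ z ∈ closedStrip, ‖f z‖ ≤ C) ∧
      ContinuousOn f closedStrip ∧
      DifferentiableOn ℂ f openStrip ∧
      f (θ : ℂ) = x ∧
      M = max (w₀ * ⨆ t : ℝ, ‖f (Complex.I * t)‖)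
              (w₁ * ⨆ t : ℝ, ‖f (1 + Complex.I * t)‖)}, T ≤ M := by
    rintro M ⟨f, ⟨C, hC⟩, hcont, hdiff, hfθ, rfl⟩
    have := lower_bound θ hθ w₀ w₁ h₀ h₁ f C hC hcont hdiff
    rwa [hfθ] at this
  exact le_antisymm (csInf_le ⟨T, hlow⟩ hgmem) (le_csInf ⟨T, hgmem⟩ hlow)
end
end

section
/- Let 1 ≤ p < ∞ and M > 0. The family of vertical Mazur maps {f_a : a ∈ ℝ, |a| ≤ M} is uniformly equicontinuous on the closed unit ball of ℓ_p: for every ε > 0 there exists δ > 0 such that for all a with |a| ≤ M and all x, y in the closed unit ball of ℓ_p with ‖x − y‖_p < δ, one has ‖f_a x − f_a y‖_p < ε. (Hence the vertical homeomorphisms of the (ℓ_∞, ℓ_q) scale have a common modulus of uniform continuity whenever the parameter t/θ ranges in a bounded set; in particular this scale is uniform to the right.) -/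
open Complex Set Real

noncomputable section

def verticalMazur (a : ℝ) (x : ℕ → ℂ) (n : ℕ) : ℂ :=
  if x n = 0 then 0
  else x n * Complex.exp (Complex.I * (a : ℂ) * (Real.log ‖x n‖ : ℂ))

-- scalar version
def vm (a : ℝ) (z : ℂ) : ℂ :=
  if z = 0 then 0 else z * Complex.exp (Complex.I * (a : ℂ) * (Real.log (‖z‖) : ℂ))

lemma vm_eq (a : ℝ) (x : ℕ → ℂ) (n : ℕ) : verticalMazur a x n = vm a (x n) := rfl

lemma abs_exp_I_mul (t : ℝ) :
    ‖Complex.exp (Complex.I * (t : ℂ))‖ = 1 := by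
  rw [Complex.norm_exp]
  simp

lemma abs_exp_I_sub_one (t : ℝ) :
    ‖Complex.exp (Complex.I * (t : ℂ)) - 1‖ ≤ 2 * |t| := by
  have habs : ‖Complex.I * (t : ℂ)‖ = |t| := by
    simp [map_mul]
  rcases le_or_gt (|t|) 1 with h | h
  · have := Complex.norm_exp_sub_one_le (x := Complex.I * (t : ℂ)) (by rw [habs]; exact h)
    rwa [habs] at this
  · calc ‖Complex.exp (Complex.I * (t : ℂ)) - 1‖
        ≤ ‖Complex.exp (Complex.I * (t : ℂ))‖ + ‖(1:ℂ)‖ := by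
          simpa using norm_sub_le (Complex.exp (Complex.I * (t : ℂ))) (1:ℂ)
    _ = 2 := by rw [abs_exp_I_mul]; norm_num
    _ ≤ 2 * |t| := by nlinarith

lemma vm_lip_ordered (a M : ℝ) (hM : 0 < M) (ha : |a| ≤ M) {z w : ℂ}
    (hzw : ‖w‖ ≤ ‖z‖) :
    ‖vm a z - vm a w‖ ≤ (1 + 2 * M) * ‖z - w‖ := by
  by_cases hz : z = 0
  · have hw : w = 0 := by
      have : ‖w‖ ≤ 0 := by simpa [hz] using hzw
      simpa using le_antisymm this (norm_nonneg w)
    simp [vm, hz, hw]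
  by_cases hw : w = 0
  · have h1 : ‖vm a z - vm a w‖ = ‖z‖ := by
      simp [vm, hz, hw, map_mul, Complex.norm_exp]
    rw [h1, hw]
    have h2 : (0:ℝ) ≤ ‖z - 0‖ := norm_nonneg _
    simp only [sub_zero] at h2 ⊢
    nlinarith [norm_nonneg z]
  -- both nonzero
  set Lz := Real.log (‖z‖) with hLz
  set Lw := Real.log (‖w‖) with hLw
  have hzpos : 0 < ‖z‖ := norm_pos_iff.mpr hz
  have hwpos : 0 < ‖w‖ := norm_pos_iff.mpr hw
  have hL : Lw ≤ Lz := Real.log_le_log hwpos hzw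
  have Ez := Complex.exp (Complex.I * (a : ℂ) * (Lz : ℂ))
  have key : vm a z - vm a w
      = (z - w) * Complex.exp (Complex.I * (a : ℂ) * (Lz : ℂ))
        + w * (Complex.exp (Complex.I * (a : ℂ) * (Lz : ℂ))
             - Complex.exp (Complex.I * (a : ℂ) * (Lw : ℂ))) := by
    simp [vm, hz, hw, hLz, hLw]; ring_nf
  have habsEz : ‖Complex.exp (Complex.I * (a : ℂ) * (Lz : ℂ))‖ = 1 := by
    rw [show Complex.I * (a : ℂ) * (Lz : ℂ) = Complex.I * ((a * Lz : ℝ) : ℂ) by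
      push_cast; ring]
    exact abs_exp_I_mul _
  have habsEw : ‖Complex.exp (Complex.I * (a : ℂ) * (Lw : ℂ))‖ = 1 := by
    rw [show Complex.I * (a : ℂ) * (Lw : ℂ) = Complex.I * ((a * Lw : ℝ) : ℂ) by
      push_cast; ring]
    exact abs_exp_I_mul _
  have hdiff : Complex.exp (Complex.I * (a : ℂ) * (Lz : ℂ))
      - Complex.exp (Complex.I * (a : ℂ) * (Lw : ℂ))
      = Complex.exp (Complex.I * (a : ℂ) * (Lw : ℂ))
        * (Complex.exp (Complex.I * ((a * (Lz - Lw) : ℝ) : ℂ)) - 1) := by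
    rw [mul_sub, mul_one, ← Complex.exp_add]
    congr 1
    push_cast; ring
  have hE : ‖Complex.exp (Complex.I * (a : ℂ) * (Lz : ℂ))
      - Complex.exp (Complex.I * (a : ℂ) * (Lw : ℂ))‖ ≤ 2 * (M * (Lz - Lw)) := by
    rw [hdiff, norm_mul, habsEw, one_mul]
    refine (abs_exp_I_sub_one _).trans ?_
    rw [abs_mul, _root_.abs_of_nonneg (by linarith : (0:ℝ) ≤ Lz - Lw)]
    have : |a| * (Lz - Lw) ≤ M * (Lz - Lw) :=
      mul_le_mul_of_nonneg_right ha (by linarith)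
    nlinarith
  have hlogineq : ‖w‖ * (Lz - Lw) ≤ ‖z‖ - ‖w‖ := by
    have h1 : Lz - Lw = Real.log (‖z‖ / ‖w‖) := by
      rw [Real.log_div (ne_of_gt hzpos) (ne_of_gt hwpos)]
    have h2 : Real.log (‖z‖ / ‖w‖)
        ≤ ‖z‖ / ‖w‖ - 1 :=
      Real.log_le_sub_one_of_pos (div_pos hzpos hwpos)
    have h3 : ‖w‖ * (‖z‖ / ‖w‖ - 1)
        = ‖z‖ - ‖w‖ := by field_simp
    rw [h1]
    nlinarith [mul_le_mul_of_nonneg_left h2 (le_of_lt hwpos)]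
  have hsub : ‖z‖ - ‖w‖ ≤ ‖z - w‖ := by
    have := norm_add_le (z - w) w
    simp at this
    linarith
  calc ‖vm a z - vm a w‖
      ≤ ‖(z - w) * Complex.exp (Complex.I * (a : ℂ) * (Lz : ℂ))‖
        + ‖w * (Complex.exp (Complex.I * (a : ℂ) * (Lz : ℂ))
             - Complex.exp (Complex.I * (a : ℂ) * (Lw : ℂ)))‖ := by
        rw [key]; exact norm_add_le _ _
    _ ≤ ‖z - w‖ + ‖w‖ * (2 * (M * (Lz - Lw))) := by
        rw [norm_mul, habsEz, mul_one, norm_mul]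
        exact add_le_add le_rfl (mul_le_mul_of_nonneg_left hE (norm_nonneg w))
    _ ≤ (1 + 2 * M) * ‖z - w‖ := by nlinarith

lemma vm_lip (a M : ℝ) (hM : 0 < M) (ha : |a| ≤ M) (z w : ℂ) :
    ‖vm a z - vm a w‖ ≤ (1 + 2 * M) * ‖z - w‖ := by
  rcases le_total (‖w‖) (‖z‖) with h | h
  · exact vm_lip_ordered a M hM ha h
  · rw [norm_sub_rev, norm_sub_rev z w]
    exact vm_lip_ordered a M hM ha h

lemma two_rpow_bound {a b p : ℝ} (ha : 0 ≤ a) (hb : 0 ≤ b) (hp : 0 ≤ p) :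
    (a + b) ^ p ≤ 2 ^ p * (a ^ p + b ^ p) := by
  have hmax : a + b ≤ 2 * max a b := by
    rcases le_total a b with h | h
    · simp [max_eq_right h]; linarith
    · simp [max_eq_left h]; linarith
  have h1 : (a + b) ^ p ≤ (2 * max a b) ^ p :=
    Real.rpow_le_rpow (by linarith) hmax hp
  have h2 : (2 * max a b) ^ p = 2 ^ p * (max a b) ^ p :=
    Real.mul_rpow (by norm_num) (le_max_of_le_left ha)
  have h3 : (max a b) ^ p ≤ a ^ p + b ^ p := by
    rcases le_total a b with h | h
    · rw [max_eq_right h]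
      nlinarith [Real.rpow_nonneg ha p]
    · rw [max_eq_left h]
      nlinarith [Real.rpow_nonneg hb p]
  calc (a + b) ^ p ≤ 2 ^ p * (max a b) ^ p := h2 ▸ h1
    _ ≤ 2 ^ p * (a ^ p + b ^ p) := by
        have : (0:ℝ) ≤ 2 ^ p := Real.rpow_nonneg (by norm_num) p
        nlinarith

/-- The family of vertical Mazur maps `{f_a : |a| ≤ M}` is uniformly equicontinuous on the
closed unit ball of `ℓ_p`: for every `ε > 0` there is `δ > 0` such that for all `a` with
`|a| ≤ M` and all `x, y` in the closed unit ball of `ℓ_p` with `‖x - y‖_p < δ` one has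
`‖f_a x - f_a y‖_p < ε`. -/
theorem verticalMazur_uniformly_equicontinuous
    (p : ℝ) (hp : 1 ≤ p) (M : ℝ) (hM : 0 < M) :
    ∀ ε : ℝ, 0 < ε → ∃ δ : ℝ, 0 < δ ∧
      ∀ a : ℝ, |a| ≤ M → ∀ x y : ℕ → ℂ,
        (Summable fun n => ‖x n‖ ^ p) →
        (Summable fun n => ‖y n‖ ^ p) →
        (∑' n, ‖x n‖ ^ p) ^ (1 / p) ≤ 1 →
        (∑' n, ‖y n‖ ^ p) ^ (1 / p) ≤ 1 →
        (∑' n, ‖x n - y n‖ ^ p) ^ (1 / p) < δ →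
        (∑' n, ‖verticalMazur a x n - verticalMazur a y n‖ ^ p) ^ (1 / p) < ε := by
  intro ε hε
  set K : ℝ := 1 + 2 * M with hKdef
  have hK : 0 < K := by positivity
  refine ⟨ε / K, div_pos hε hK, ?_⟩
  intro a ha x y hx hy _ _ hxy
  have hp0 : 0 < p := lt_of_lt_of_le one_pos hp
  -- summability of |x-y|^p
  have hsum_xy : Summable fun n => ‖x n - y n‖ ^ p := by
    apply Summable.of_nonneg_of_le
      (fun n => Real.rpow_nonneg (norm_nonneg _) p)
      (fun n => ?_) (((hx.add hy).mul_left (2 ^ p)))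
    calc ‖x n - y n‖ ^ p
        ≤ (‖x n‖ + ‖y n‖) ^ p :=
          Real.rpow_le_rpow (norm_nonneg _)
            (norm_sub_le _ _) (le_of_lt hp0)
      _ ≤ 2 ^ p * (‖x n‖ ^ p + ‖y n‖ ^ p) :=
          two_rpow_bound (norm_nonneg _) (norm_nonneg _) (le_of_lt hp0)
  -- pointwise bound
  have hptw : ∀ n, ‖verticalMazur a x n - verticalMazur a y n‖ ^ p
      ≤ K ^ p * ‖x n - y n‖ ^ p := by
    intro n
    have h1 : ‖verticalMazur a x n - verticalMazur a y n‖
        ≤ K * ‖x n - y n‖ := by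
      rw [vm_eq, vm_eq]
      exact vm_lip a M hM ha (x n) (y n)
    calc ‖verticalMazur a x n - verticalMazur a y n‖ ^ p
        ≤ (K * ‖x n - y n‖) ^ p :=
          Real.rpow_le_rpow (norm_nonneg _) h1 (le_of_lt hp0)
      _ = K ^ p * ‖x n - y n‖ ^ p :=
          Real.mul_rpow (le_of_lt hK) (norm_nonneg _)
  have hsum_d : Summable fun n =>
      ‖verticalMazur a x n - verticalMazur a y n‖ ^ p :=
    Summable.of_nonneg_of_le (fun n => Real.rpow_nonneg (norm_nonneg _) p)
      hptw (hsum_xy.mul_left (K ^ p))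
  have htsum : (∑' n, ‖verticalMazur a x n - verticalMazur a y n‖ ^ p)
      ≤ K ^ p * ∑' n, ‖x n - y n‖ ^ p := by
    rw [← tsum_mul_left]
    exact Summable.tsum_le_tsum hptw hsum_d (hsum_xy.mul_left (K ^ p))
  have hT0 : (0:ℝ) ≤ ∑' n, ‖x n - y n‖ ^ p :=
    tsum_nonneg fun n => Real.rpow_nonneg (norm_nonneg _) p
  calc (∑' n, ‖verticalMazur a x n - verticalMazur a y n‖ ^ p) ^ (1 / p)
      ≤ (K ^ p * ∑' n, ‖x n - y n‖ ^ p) ^ (1 / p) :=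
        Real.rpow_le_rpow
          (tsum_nonneg fun n => Real.rpow_nonneg (norm_nonneg _) p)
          htsum (by positivity)
    _ = K * (∑' n, ‖x n - y n‖ ^ p) ^ (1 / p) := by
        rw [one_div, Real.mul_rpow (Real.rpow_nonneg (le_of_lt hK) p) hT0,
          Real.rpow_rpow_inv (le_of_lt hK) (ne_of_gt hp0)]
    _ < K * (ε / K) := by
        exact mul_lt_mul_of_pos_left hxy hK
    _ = ε := by field_simp
end
end
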